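/- arXiv:2404.05780 — 11 statements merged into one kernel-verified Lean document; each statement's English description precedes it below -/
import Mathlib

section
/- For a commutative ring R, the following are equivalent: (1) every unimodular 2×2 matrix over R of determinant 0 is extendable; (2) every unimodular 2×2 matrix over R of determinant 0 is non-full; (3) for every unimodular 2×2 matrix A over R of determinant 0, the kernel of the R-linear map R² → R² given by A is isomorphic to R as an R-module. -/
open Matrix

/-- A `2 × 2` matrix is unimodular if its four entries generate the unit ideal. -/
def Unimodular2 {R : Type*} [CommRing R] (A : Matrix (Fin 2) (Fin 2) R) : Prop :=
  Ideal.span {A 0 0, A 0 1, A 1 0, A 1 1} = ⊤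

/-- A `2 × 2` matrix is extendable if it is the top-left block of a `3 × 3` matrix
of determinant `1`. -/
def Extendable {R : Type*} [CommRing R] (A : Matrix (Fin 2) (Fin 2) R) : Prop :=
  ∃ B : Matrix (Fin 3) (Fin 3) R, B.det = 1 ∧
    ∀ i j : Fin 2, B i.castSucc j.castSucc = A i j

/-- A `2 × 2` matrix is simply extendable if it is the top-left block of a `3 × 3` matrix
of determinant `1` whose `(3,3)` entry is `0`. -/
def SimplyExtendable {R : Type*} [CommRing R] (A : Matrix (Fin 2) (Fin 2) R) : Prop :=
  ∃ B : Matrix (Fin 3) (Fin 3) R, B.det = 1 ∧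
    (∀ i j : Fin 2, B i.castSucc j.castSucc = A i j) ∧ B 2 2 = 0

/-- A `2 × 2` matrix is non-full if it is the product of a `2 × 1` and a `1 × 2` matrix. -/
def NonFull {R : Type*} [CommRing R] (A : Matrix (Fin 2) (Fin 2) R) : Prop :=
  ∃ l m o q : R, A = !![l * o, l * q; m * o, m * q]


/-!
If `A = (l, m)ᵀ (o, q)` is unimodular, then so are the rows `(l, m)` and `(o, q)`, and a Bézout
column and row complete `A` to a `3 × 3` matrix of determinant `1`. If `B` of determinant `1`
extends `A`, the bottom row of `B` restricted to `ker A` is injective since `B` is invertible, and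
surjective since `adjugate B *ᵥ e₂` solves `B x = e₂` and has last entry `det A = 0`. Finally, when
`det A = 0` both columns of `adjugate A` lie in `ker A`; if `ker A` is cyclic on `g` they are
multiples of `g`, and since they are the columns of `A` swapped and negated, `A` is an outer
product.
-/

section

variable {R : Type*} [CommRing R]

lemma exists_mul_add_eq_one_of_span_eq_top {a b c d : R} (h : Ideal.span {a, b, c, d} = ⊤) :
    ∃ α β γ δ : R, α * a + β * b + γ * c + δ * d = 1 := by
  obtain ⟨α, z₁, hz₁, e₁⟩ := Ideal.mem_span_insert.mp (h ▸ Submodule.mem_top : (1 : R) ∈ _)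
  obtain ⟨β, z₂, hz₂, e₂⟩ := Ideal.mem_span_insert.mp hz₁
  obtain ⟨γ, z₃, hz₃, e₃⟩ := Ideal.mem_span_insert.mp hz₂
  obtain ⟨δ, e₄⟩ := Ideal.mem_span_singleton'.mp hz₃
  exact ⟨α, β, γ, δ, by rw [e₁, e₂, e₃, ← e₄]; ring⟩

-- The determinant of the completion is `(l * y + m * x) * (o * t + q * s)`.
lemma extendable_outer_product {l m o q x y s t : R} (hlm : l * y + m * x = 1)
    (hoq : o * t + q * s = 1) : Extendable !![l * o, l * q; m * o, m * q] := by
  refine ⟨!![l * o, l * q, x; m * o, m * q, -y; -s, t, 0], ?_, ?_⟩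
  · rw [det_fin_three]
    simp only [of_apply, cons_val', cons_val_zero, cons_val_one, cons_val_two, empty_val',
      cons_val_fin_one, head_cons, tail_cons, head_fin_const]
    linear_combination (o * t + q * s) * hlm + hoq
  · intro i j
    fin_cases i <;> fin_cases j <;> rfl

theorem NonFull.extendable {A : Matrix (Fin 2) (Fin 2) R} (hu : Unimodular2 A) (hA : NonFull A) :
    Extendable A := by
  obtain ⟨l, m, o, q, rfl⟩ := hA
  obtain ⟨α, β, γ, δ, h⟩ := exists_mul_add_eq_one_of_span_eq_top (by simpa [Unimodular2] using hu)
  exact extendable_outer_product (x := γ * o + δ * q) (y := α * o + β * q)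
    (s := β * l + δ * m) (t := α * l + γ * m) (by linear_combination h) (by linear_combination h)

section Block

variable {A : Matrix (Fin 2) (Fin 2) R} {B : Matrix (Fin 3) (Fin 3) R}
  (hB : ∀ i j : Fin 2, B i.castSucc j.castSucc = A i j)
include hB

lemma mulVec_vecCons_zero_of_block (v : Fin 2 → R) :
    B *ᵥ ![v 0, v 1, 0] = ![(A *ᵥ v) 0, (A *ᵥ v) 1, B 2 0 * v 0 + B 2 1 * v 1] := by
  have h₀₀ : B 0 0 = A 0 0 := hB 0 0
  have h₀₁ : B 0 1 = A 0 1 := hB 0 1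
  have h₁₀ : B 1 0 = A 1 0 := hB 1 0
  have h₁₁ : B 1 1 = A 1 1 := hB 1 1
  ext i
  fin_cases i <;> simp [mulVec, dotProduct, Fin.sum_univ_three, Fin.sum_univ_two, *]

lemma adjugate_two_two_of_block : B.adjugate 2 2 = A.det := by
  have h₀₀ : B 0 0 = A 0 0 := hB 0 0
  have h₀₁ : B 0 1 = A 0 1 := hB 0 1
  have h₁₀ : B 1 0 = A 1 0 := hB 1 0
  have h₁₁ : B 1 1 = A 1 1 := hB 1 1
  simp [adjugate_fin_three, det_fin_two, *]

end Block

theorem Extendable.nonempty_ker_linearEquiv {A : Matrix (Fin 2) (Fin 2) R} (hE : Extendable A)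
    (hA : A.det = 0) : Nonempty (LinearMap.ker A.mulVecLin ≃ₗ[R] R) := by
  obtain ⟨B, hB, hblock⟩ := hE
  let ψ : (Fin 2 → R) →ₗ[R] R := B 2 0 • LinearMap.proj 0 + B 2 1 • LinearMap.proj 1
  have hψ (v : Fin 2 → R) : B *ᵥ ![v 0, v 1, 0] = ![(A *ᵥ v) 0, (A *ᵥ v) 1, ψ v] :=
    mulVec_vecCons_zero_of_block hblock v
  have hinj : Function.Injective (ψ ∘ₗ (LinearMap.ker A.mulVecLin).subtype) := by
    refine LinearMap.ker_eq_bot.mp (LinearMap.ker_eq_bot'.mpr fun ⟨v, hv⟩ hψv => ?_)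
    have hv : A *ᵥ v = 0 := hv
    have hψv : ψ v = 0 := hψv
    have hB0 : B *ᵥ ![v 0, v 1, 0] = B *ᵥ 0 := by
      rw [hψ, hv, hψv, mulVec_zero]; ext i; fin_cases i <;> rfl
    have := mulVec_injective_of_isUnit ((isUnit_iff_isUnit_det B).2 (hB ▸ isUnit_one)) hB0
    ext i
    fin_cases i
    · exact congrFun this 0
    · exact congrFun this 1
  have hsurj : Function.Surjective (ψ ∘ₗ (LinearMap.ker A.mulVecLin).subtype) := by
    obtain ⟨x, hx⟩ : ∃ x, x = B.adjugate *ᵥ Pi.single 2 1 := ⟨_, rfl⟩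
    have hBx : B *ᵥ x = Pi.single 2 1 := by
      rw [hx, mulVec_mulVec, mul_adjugate, hB, one_smul, one_mulVec]
    have hx₂ : x 2 = 0 := by
      rw [hx, mulVec_single_one, col_apply, adjugate_two_two_of_block hblock, hA]
    set w : Fin 2 → R := ![x 0, x 1]
    have hxw : x = ![w 0, w 1, 0] := by
      ext i; fin_cases i <;> simp [w, hx₂]
    rw [hxw, hψ] at hBx
    have hw : w ∈ LinearMap.ker A.mulVecLin := by
      ext i; fin_cases i
      · simpa using congrFun hBx 0
      · simpa using congrFun hBx 1
    have hψw : ψ w = 1 := by simpa using congrFun hBx 2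
    intro r
    exact ⟨r • ⟨w, hw⟩, by simp [hψw]⟩
  exact ⟨LinearEquiv.ofBijective _ ⟨hinj, hsurj⟩⟩

lemma adjugate_col_mem_ker_of_det_eq_zero {n : Type*} [Fintype n] [DecidableEq n]
    {A : Matrix n n R} (hA : A.det = 0) (j : n) : A.adjugate.col j ∈ LinearMap.ker A.mulVecLin := by
  rw [LinearMap.mem_ker, mulVecLin_apply, ← mulVec_single_one, mulVec_mulVec, mul_adjugate, hA,
    zero_smul, zero_mulVec]

lemma Submodule.le_span_singleton_symm_one {M : Type*} [AddCommGroup M] [Module R M]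
    {p : Submodule R M} (e : p ≃ₗ[R] R) : p ≤ R ∙ (e.symm 1 : M) := fun v hv =>
  Submodule.mem_span_singleton.mpr ⟨e ⟨v, hv⟩, by
    rw [← Submodule.coe_smul, ← map_smul, smul_eq_mul, mul_one, e.symm_apply_apply]⟩

lemma nonFull_of_ker_le_span_singleton {A : Matrix (Fin 2) (Fin 2) R} (hA : A.det = 0)
    {g : Fin 2 → R} (hg : LinearMap.ker A.mulVecLin ≤ R ∙ g) : NonFull A := by
  obtain ⟨r₀, h₀⟩ := Submodule.mem_span_singleton.mp (hg (adjugate_col_mem_ker_of_det_eq_zero hA 0))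
  obtain ⟨r₁, h₁⟩ := Submodule.mem_span_singleton.mp (hg (adjugate_col_mem_ker_of_det_eq_zero hA 1))
  rw [adjugate_fin_two] at h₀ h₁
  refine ⟨r₁, -r₀, g 1, -g 0, ?_⟩
  have e₀₀ := congrFun h₀ 0; have e₀₁ := congrFun h₀ 1
  have e₁₀ := congrFun h₁ 0; have e₁₁ := congrFun h₁ 1
  simp only [Pi.smul_apply, smul_eq_mul, col_apply, of_apply, cons_val', cons_val_zero,
    cons_val_one, empty_val', cons_val_fin_one] at e₀₀ e₀₁ e₁₀ e₁₁
  ext i j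
  fin_cases i <;> fin_cases j <;> simp
  · linear_combination -e₁₁
  · linear_combination e₁₀
  · linear_combination e₀₁
  · linear_combination -e₀₀

end

theorem stmt0 (R : Type*) [CommRing R] :
    [(∀ A : Matrix (Fin 2) (Fin 2) R, Unimodular2 A → A.det = 0 → Extendable A),
     (∀ A : Matrix (Fin 2) (Fin 2) R, Unimodular2 A → A.det = 0 → NonFull A),
     (∀ A : Matrix (Fin 2) (Fin 2) R, Unimodular2 A → A.det = 0 →
        Nonempty (↥(LinearMap.ker A.mulVecLin) ≃ₗ[R] R))].TFAE := by
  tfae_have 1 → 3 := fun h A hu hA => (h A hu hA).nonempty_ker_linearEquiv hA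
  tfae_have 3 → 2 := fun h A hu hA =>
    (h A hu hA).elim fun e =>
      nonFull_of_ker_le_span_singleton hA (Submodule.le_span_singleton_symm_one e)
  tfae_have 2 → 1 := fun h A hu hA => (h A hu hA).extendable hu
  tfae_finish
end

section
/- Let R be an integral domain of Krull dimension 1. Then every unimodular 2×2 matrix over R with nonzero determinant is simply extendable. -/
open Matrix

/-!
Write `Δ = ad - bc`. A third row `(g, 1 - g)` with `(3,3)` entry `0` can be completed to a matrix
of determinant `1` as soon as `a(1 - g) - bg` and `c(1 - g) - dg` are coprime. Away from `Δ`
this holds for every `g`, by Cramer's rule. Since `R` has dimension one and `Δ ≠ 0`, the ring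
`R/(Δ)` is zero-dimensional, hence π-regular, so it has an idempotent vanishing exactly at the
primes that contain both `b` and `d`. Lifting that idempotent to `g` handles the primes
containing `Δ`, because by unimodularity `(a, c)` and `(b, d)` cannot both vanish there.
-/

open Ideal

section ZeroDimensionalQuotient

variable {R : Type*} [CommRing R] {I : Ideal R}

theorem exists_pow_succ_mul_one_sub_mul_mem
    (hI : ∀ p : Ideal R, p.IsPrime → I ≤ p → p.IsMaximal) (b : R) :
    ∃ (n : ℕ) (x : R), b ^ (n + 1) * (1 - x * b) ∈ I := by
  -- A prime containing `I` and avoiding all `b ^ n * (1 - x * b)` would be maximal without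
  -- containing `b`, so `b` would be invertible modulo it.
  by_contra! h
  let W : Submonoid R :=
    { carrier := {s | ∃ (n : ℕ) (x : R), b ^ n * (1 - x * b) = s}
      mul_mem' := by
        rintro _ _ ⟨n, x, rfl⟩ ⟨m, y, rfl⟩
        exact ⟨n + m, x + y - x * y * b, by ring⟩
      one_mem' := ⟨0, 0, by ring⟩ }
  have hIW : Disjoint (I : Set R) W := by
    refine Set.disjoint_left.mpr ?_
    rintro _ hs ⟨n, x, rfl⟩
    exact h n x (by simpa only [pow_succ', mul_assoc] using I.mul_mem_left b hs)
  obtain ⟨p, hp, hIp, hpW⟩ := I.exists_le_prime_disjoint W hIW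
  have hb : b ∉ p := fun hb => Set.disjoint_left.mp hpW hb ⟨1, 0, by ring⟩
  obtain ⟨y, i, hi, hyi⟩ := (hI p hp hIp).exists_inv hb
  have hyb : 1 - y * b ∈ p := by rwa [← hyi, add_sub_cancel_left]
  exact Set.disjoint_left.mp hpW hyb ⟨0, y, by ring⟩

theorem exists_mul_one_sub_mem_and_mem_iff
    (hI : ∀ p : Ideal R, p.IsPrime → I ≤ p → p.IsMaximal) (b : R) :
    ∃ e : R, e * (1 - e) ∈ I ∧ ∀ p : Ideal R, p.IsPrime → I ≤ p → (e ∈ p ↔ b ∈ p) := by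
  obtain ⟨n, x, hbx⟩ := exists_pow_succ_mul_one_sub_mul_mem hI b
  have hfix : b ^ (n + 1) * (1 - (x * b) ^ (n + 1)) ∈ I := by
    obtain ⟨c, hc⟩ := one_sub_dvd_one_sub_pow (x * b) (n + 1)
    rw [hc, ← mul_assoc]
    exact I.mul_mem_right c hbx
  refine ⟨(x * b) ^ (n + 1), ?_, fun p hp hIp => ⟨fun he => ?_, fun hb => ?_⟩⟩
  · rw [show (x * b) ^ (n + 1) * (1 - (x * b) ^ (n + 1))
      = x ^ (n + 1) * (b ^ (n + 1) * (1 - (x * b) ^ (n + 1))) by ring]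
    exact I.mul_mem_left _ hfix
  · refine hp.mem_of_pow_mem (n + 1) ?_
    rw [show b ^ (n + 1) = b ^ (n + 1) * (1 - (x * b) ^ (n + 1)) + b ^ (n + 1) * (x * b) ^ (n + 1)
      by ring]
    exact p.add_mem (hIp hfix) (p.mul_mem_left _ he)
  · exact p.pow_mem_of_mem (p.mul_mem_left x hb) _ n.succ_pos

theorem Ideal.IsPrime.mem_iff_one_sub_notMem {p : Ideal R} (hp : p.IsPrime) {e : R}
    (he : e * (1 - e) ∈ p) : e ∈ p ↔ 1 - e ∉ p :=
  ⟨fun h h' => hp.ne_top ((eq_top_iff_one p).mpr (by simpa using p.add_mem h h')),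
    (hp.mem_or_mem he).resolve_right⟩

theorem exists_mul_one_sub_mem_and_mem_iff_and
    (hI : ∀ p : Ideal R, p.IsPrime → I ≤ p → p.IsMaximal) (b d : R) :
    ∃ g : R, g * (1 - g) ∈ I ∧
      ∀ p : Ideal R, p.IsPrime → I ≤ p → (g ∈ p ↔ b ∈ p ∧ d ∈ p) := by
  obtain ⟨e, he, hep⟩ := exists_mul_one_sub_mem_and_mem_iff hI b
  obtain ⟨f, hf, hfp⟩ := exists_mul_one_sub_mem_and_mem_iff hI d
  have hg : (1 - (1 - e) * (1 - f)) * (1 - (1 - (1 - e) * (1 - f))) ∈ I := by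
    rw [show (1 - (1 - e) * (1 - f)) * (1 - (1 - (1 - e) * (1 - f)))
      = e * (1 - e) * (1 - f) ^ 2 + (1 - e) * (f * (1 - f)) by ring]
    exact I.add_mem (I.mul_mem_right _ he) (I.mul_mem_left _ hf)
  refine ⟨1 - (1 - e) * (1 - f), hg, fun p hp hIp => ?_⟩
  rw [hp.mem_iff_one_sub_notMem (hIp hg), sub_sub_cancel, hp.mul_mem_iff_mem_or_mem, not_or,
    ← hp.mem_iff_one_sub_notMem (hIp he), ← hp.mem_iff_one_sub_notMem (hIp hf), hep p hp hIp,
    hfp p hp hIp]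

end ZeroDimensionalQuotient

theorem simplyExtendable_of_isCoprime {R : Type*} [CommRing R] {A : Matrix (Fin 2) (Fin 2) R}
    {g h : R} (H : IsCoprime (A 0 0 * h - A 0 1 * g) (A 1 0 * h - A 1 1 * g)) :
    SimplyExtendable A := by
  obtain ⟨u, w, huw⟩ := H
  refine ⟨!![A 0 0, A 0 1, w; A 1 0, A 1 1, -u; g, h, 0], ?_, ?_, rfl⟩
  · rw [Matrix.det_fin_three]
    simp only [Fin.isValue, of_apply, cons_val', cons_val_zero, cons_val_fin_one, cons_val_one,
      cons_val, mul_zero, mul_neg, neg_mul, sub_neg_eq_add, zero_add, sub_zero]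
    linear_combination huw
  · intro i j
    fin_cases i <;> fin_cases j <;> rfl

section ColumnCombination

variable {R : Type*} [CommRing R] {a b c d g : R} {p : Ideal R}

theorem Ideal.IsPrime.mul_sub_mul_mem (hp : p.IsPrime) (hx₁ : a * (1 - g) - b * g ∈ p)
    (hx₂ : c * (1 - g) - d * g ∈ p) : a * d - b * c ∈ p := by
  by_contra hΔ
  have hg : g ∈ p := by
    refine (hp.mem_or_mem ?_).resolve_right hΔ
    rw [show g * (a * d - b * c) = c * (a * (1 - g) - b * g) - a * (c * (1 - g) - d * g) by ring]
    exact p.sub_mem (p.mul_mem_left c hx₁) (p.mul_mem_left a hx₂)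
  have h1g : 1 - g ∈ p := by
    refine (hp.mem_or_mem ?_).resolve_right hΔ
    rw [show (1 - g) * (a * d - b * c)
      = d * (a * (1 - g) - b * g) - b * (c * (1 - g) - d * g) by ring]
    exact p.sub_mem (p.mul_mem_left d hx₁) (p.mul_mem_left b hx₂)
  exact hp.ne_top ((eq_top_iff_one p).mpr (by simpa using p.add_mem hg h1g))

theorem Ideal.IsPrime.span_le_of_mem_iff (hp : p.IsPrime) (hx₁ : a * (1 - g) - b * g ∈ p)
    (hx₂ : c * (1 - g) - d * g ∈ p) (hg : g * (1 - g) ∈ p) (hgp : g ∈ p ↔ b ∈ p ∧ d ∈ p) :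
    Ideal.span {a, b, c, d} ≤ p := by
  suffices a ∈ p ∧ b ∈ p ∧ c ∈ p ∧ d ∈ p by
    simpa only [span_le, Set.insert_subset_iff, Set.singleton_subset_iff, SetLike.mem_coe]
  by_cases hg' : g ∈ p
  · obtain ⟨hb, hd⟩ := hgp.mp hg'
    have h1g : 1 - g ∉ p := (hp.mem_iff_one_sub_notMem hg).mp hg'
    have ha : a * (1 - g) ∈ p := by
      rw [show a * (1 - g) = (a * (1 - g) - b * g) + b * g by ring]
      exact p.add_mem hx₁ (p.mul_mem_right g hb)
    have hc : c * (1 - g) ∈ p := by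
      rw [show c * (1 - g) = (c * (1 - g) - d * g) + d * g by ring]
      exact p.add_mem hx₂ (p.mul_mem_right g hd)
    exact ⟨(hp.mem_or_mem ha).resolve_right h1g, hb, (hp.mem_or_mem hc).resolve_right h1g, hd⟩
  · have h1g : 1 - g ∈ p := not_not.mp (mt (hp.mem_iff_one_sub_notMem hg).mpr hg')
    have hb : b * g ∈ p := by
      rw [show b * g = a * (1 - g) - (a * (1 - g) - b * g) by ring]
      exact p.sub_mem (p.mul_mem_left a h1g) hx₁
    have hd : d * g ∈ p := by
      rw [show d * g = c * (1 - g) - (c * (1 - g) - d * g) by ring]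
      exact p.sub_mem (p.mul_mem_left c h1g) hx₂
    exact absurd (hgp.mpr ⟨(hp.mem_or_mem hb).resolve_right hg',
      (hp.mem_or_mem hd).resolve_right hg'⟩) hg'

theorem isCoprime_mul_one_sub_sub_mul (habcd : Ideal.span {a, b, c, d} = ⊤)
    (hg : g * (1 - g) ∈ Ideal.span {a * d - b * c})
    (hgp : ∀ p : Ideal R, p.IsPrime → a * d - b * c ∈ p → (g ∈ p ↔ b ∈ p ∧ d ∈ p)) :
    IsCoprime (a * (1 - g) - b * g) (c * (1 - g) - d * g) := by
  rw [← Ideal.sup_eq_top_iff_isCoprime]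
  by_contra hne
  obtain ⟨m, hm, hle⟩ := Ideal.exists_le_maximal _ hne
  have hx₁ : a * (1 - g) - b * g ∈ m := hle (mem_sup_left (mem_span_singleton_self _))
  have hx₂ : c * (1 - g) - d * g ∈ m := hle (mem_sup_right (mem_span_singleton_self _))
  have hΔ := hm.isPrime.mul_sub_mul_mem hx₁ hx₂
  refine hm.ne_top (top_unique (habcd ▸ ?_))
  exact hm.isPrime.span_le_of_mem_iff hx₁ hx₂ ((span_singleton_le_iff_mem _).mpr hΔ hg)
    (hgp m hm.isPrime hΔ)

end ColumnCombination

theorem simplyExtendable_of_forall_isMaximal {R : Type*} [CommRing R]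
    {A : Matrix (Fin 2) (Fin 2) R} (hA : Unimodular2 A)
    (hdet : ∀ p : Ideal R, p.IsPrime → A.det ∈ p → p.IsMaximal) : SimplyExtendable A := by
  rw [Matrix.det_fin_two] at hdet
  obtain ⟨g, hg, hgp⟩ := exists_mul_one_sub_mem_and_mem_iff_and
    (fun p hp hle => hdet p hp ((span_singleton_le_iff_mem _).mp hle)) (A 0 1) (A 1 1)
  exact simplyExtendable_of_isCoprime (isCoprime_mul_one_sub_sub_mul hA hg
    fun p hp hΔ => hgp p hp ((span_singleton_le_iff_mem _).mpr hΔ))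

theorem stmt2 (R : Type*) [CommRing R] [IsDomain R] (hdim : ringKrullDim R = 1) :
    ∀ A : Matrix (Fin 2) (Fin 2) R, Unimodular2 A → A.det ≠ 0 → SimplyExtendable A := by
  intro A hA hdet
  have : Ring.KrullDimLE 1 R := Ring.krullDimLE_iff.mpr hdim.le
  exact simplyExtendable_of_forall_isMaximal hA fun p hp hdetp =>
    hp.isMaximal_of_ne_bot fun hbot => hdet (by simpa [hbot] using hdetp)
end

section
/- Let R be a commutative ring of almost stable range 1. Then every upper triangular unimodular 2×2 matrix over R is simply extendable. -/
open Matrix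

/-- `R` has almost stable range 1: for every ideal not contained in the Jacobson radical,
the quotient has stable range at most 1. -/
def AlmostStableRange1 (R : Type*) [CommRing R] : Prop :=
  ∀ I : Ideal R, ¬ I ≤ Ideal.jacobson (⊥ : Ideal R) →
    ∀ a b : R ⧸ I, Ideal.span {a, b} = ⊤ → ∃ r : R ⧸ I, IsUnit (a + b * r)

lemma coeffs3 {R : Type*} [CommRing R] {a b d : R} (h : Ideal.span {a, b, d} = ⊤) :
    ∃ x y z : R, x * a + y * b + z * d = 1 := by
  have h1 : (1 : R) ∈ Ideal.span {a, b, d} := h ▸ Submodule.mem_top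
  rw [show ({a, b, d} : Set R) = insert a {b, d} from rfl, Ideal.mem_span_insert] at h1
  obtain ⟨x, w, hw, hx⟩ := h1
  rw [Ideal.mem_span_insert] at hw
  obtain ⟨y, w', hw', hy⟩ := hw
  rw [Ideal.mem_span_singleton] at hw'
  obtain ⟨z, hz⟩ := hw'
  exact ⟨x, y, z, by rw [hx, hy, hz]; ring⟩

-- candidate matrix helper
lemma simply_of_entries {R : Type*} [CommRing R] (A : Matrix (Fin 2) (Fin 2) R)
    (h10 : A 1 0 = 0) (x y z w : R)
    (h : y * (A 0 1 * z - A 0 0 * w) - x * A 1 1 * z = 1) :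
    SimplyExtendable A := by
  refine ⟨!![A 0 0, A 0 1, x; 0, A 1 1, y; z, w, 0], ?_, ?_, ?_⟩
  · rw [Matrix.det_fin_three]
    simp
    linear_combination h
  · intro i j
    fin_cases i <;> fin_cases j <;> simp [h10]
  · simp

theorem stmt7 (R : Type*) [CommRing R] (hasr : AlmostStableRange1 R) :
    ∀ A : Matrix (Fin 2) (Fin 2) R, Unimodular2 A → A 1 0 = 0 → SimplyExtendable A := by
  intro A hA h10
  have hspan : Ideal.span ({A 0 0, A 0 1, A 1 1} : Set R) = ⊤ := by
    rw [Unimodular2, h10] at hA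
    rw [eq_top_iff, ← hA, Ideal.span_le]
    intro x hx
    simp only [Set.mem_insert_iff, Set.mem_singleton_iff] at hx
    rcases hx with h | h | h | h
    · exact h ▸ Ideal.subset_span (by simp)
    · exact h ▸ Ideal.subset_span (by simp)
    · exact h ▸ Ideal.zero_mem _
    · exact h ▸ Ideal.subset_span (by simp)
  obtain ⟨x, y, z, hxyz⟩ := coeffs3 hspan
  set a := A 0 0
  set b := A 0 1
  set d := A 1 1
  by_cases hJ : Ideal.span ({d} : Set R) ≤ Ideal.jacobson (⊥ : Ideal R)
  · -- then (a, b) is unimodular: x*a + y*b = 1 - z*d, and z*d in jacobson radical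
    have hab : Ideal.span ({a, b} : Set R) = ⊤ := by
      by_contra hne
      obtain ⟨m, hm, hle⟩ := Ideal.exists_le_maximal _ hne
      have hdm : d ∈ m := by
        have : d ∈ Ideal.jacobson (⊥ : Ideal R) := hJ (Ideal.subset_span rfl)
        rw [Ideal.jacobson] at this
        exact Submodule.mem_sInf.mp this m ⟨bot_le, hm⟩
      have ham : a ∈ m := hle (Ideal.subset_span (by simp))
      have hbm : b ∈ m := hle (Ideal.subset_span (by simp))
      have : (1 : R) ∈ m := by
        rw [← hxyz]
        exact add_mem (add_mem (m.mul_mem_left x ham) (m.mul_mem_left y hbm))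
          (m.mul_mem_left z hdm)
      exact hm.ne_top (Ideal.eq_top_of_isUnit_mem m this isUnit_one)
    rw [Ideal.span_pair_comm] at hab
    obtain ⟨t, s, hts⟩ := Ideal.mem_span_pair.mp (hab ▸ Submodule.mem_top : (1:R) ∈ _)
    -- t*b + s*a = 1 ; use B = !![a,b,0;0,d,1;t,-s,0]
    exact simply_of_entries A h10 0 1 t (-s) (by linear_combination hts)
  · -- almost stable range 1 case
    set I := Ideal.span ({d} : Set R)
    have hd0 : Ideal.Quotient.mk I d = 0 :=
      Ideal.Quotient.eq_zero_iff_mem.mpr (Ideal.subset_span rfl)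
    have hq : Ideal.span ({Ideal.Quotient.mk I b, Ideal.Quotient.mk I a} : Set (R ⧸ I)) = ⊤ := by
      rw [Ideal.eq_top_iff_one, Ideal.mem_span_pair]
      refine ⟨Ideal.Quotient.mk I y, Ideal.Quotient.mk I x, ?_⟩
      have := congrArg (Ideal.Quotient.mk I) hxyz
      simp only [map_add, _root_.map_mul, _root_.map_one, hd0, mul_zero, add_zero] at this
      linear_combination this
    obtain ⟨r', hr'⟩ := hasr I hJ _ _ hq
    obtain ⟨r, rfl⟩ := Ideal.Quotient.mk_surjective r'
    obtain ⟨v', hv'⟩ := isUnit_iff_exists_inv.mp hr'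
    obtain ⟨v, rfl⟩ := Ideal.Quotient.mk_surjective v'
    have : Ideal.Quotient.mk I ((b + a * r) * v) = Ideal.Quotient.mk I 1 := by
      simp only [map_add, _root_.map_mul, _root_.map_one, ← hv']
    rw [Ideal.Quotient.eq, Ideal.mem_span_singleton] at this
    obtain ⟨c, hc⟩ := this
    -- (b + a*r)*v - 1 = d * c
    -- B = !![a, b, c; 0, d, v; 1, -r, 0]; det = v*(b*1 - a*(-r)) - c*d*1
    exact simply_of_entries A h10 c v 1 (-r) (by linear_combination hc)
end

section
/- Every elementary divisor ring is an SE₂ ring, i.e., if R is an elementary divisor ring then every unimodular 2×2 matrix over R is simply extendable. -/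
/-!
Expanding along the last row and column, `det !![A, v; -w, 0] = w ⬝ᵥ (adjugate A *ᵥ v)`, so a
`2 × 2` matrix is simply extendable as soon as the bilinear form of its adjugate takes the value
`1`. Since `adjugate (M * A * N) = adjugate N * adjugate A * adjugate M`, this property passes from
`M * A * N` to `A`. Over an elementary divisor ring, `M * A * N = diag(d, d')` with `d ∣ d'`; every
entry of `A = M⁻¹ * diag(d, d') * N⁻¹` then lies in `(d)`, so unimodularity makes `d` a unit, and
`d` is an entry of the adjugate of `diag(d, d')`.
-/

open Matrix

/-- Kaplansky-Hermite ring: every pair is a common multiple of a unimodular pair. -/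
def IsHermiteRing (R : Type*) [CommRing R] : Prop :=
  ∀ a b : R, ∃ d a₁ b₁ : R, a = d * a₁ ∧ b = d * b₁ ∧ Ideal.span {a₁, b₁} = ⊤

/-- An elementary divisor ring: every rectangular matrix admits diagonal reduction. -/
def IsEDR (R : Type*) [CommRing R] : Prop :=
  ∀ (m n : ℕ) (A : Matrix (Fin m) (Fin n) R),
    ∃ (M : Matrix (Fin m) (Fin m) R) (N : Matrix (Fin n) (Fin n) R),
      IsUnit M.det ∧ IsUnit N.det ∧
      (∀ (i : Fin m) (j : Fin n), (i : ℕ) ≠ (j : ℕ) → (M * A * N) i j = 0) ∧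
      (∀ k : ℕ, (hk : k + 1 < min m n) →
        (M * A * N) ⟨k, by omega⟩ ⟨k, by omega⟩ ∣
          (M * A * N) ⟨k + 1, by omega⟩ ⟨k + 1, by omega⟩)

def AdjugateRepresentsOne {n : Type*} [Fintype n] [DecidableEq n] {R : Type*} [CommRing R]
    (A : Matrix n n R) : Prop :=
  ∃ w v : n → R, w ⬝ᵥ (A.adjugate *ᵥ v) = 1

section

variable {n : Type*} [Fintype n] [DecidableEq n] {R : Type*} [CommRing R]

theorem adjugateRepresentsOne_of_isUnit_adjugate_apply {A : Matrix n n R} {i j : n}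
    (h : IsUnit (A.adjugate i j)) : AdjugateRepresentsOne A := by
  obtain ⟨u, hu⟩ := h
  refine ⟨Pi.single i ↑u⁻¹, Pi.single j 1, ?_⟩
  simp [mulVec_single, ← hu]

theorem AdjugateRepresentsOne.of_mul_mul {A : Matrix n n R} (M N : Matrix n n R)
    (h : AdjugateRepresentsOne (M * A * N)) : AdjugateRepresentsOne A := by
  obtain ⟨w, v, h⟩ := h
  refine ⟨w ᵥ* N.adjugate, M.adjugate *ᵥ v, ?_⟩
  rw [← h, adjugate_mul_distrib, adjugate_mul_distrib, ← mulVec_mulVec, ← mulVec_mulVec]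
  simp only [dotProduct_mulVec]

end

theorem Matrix.mul_mul_apply_mem {m n p q R : Type*} [Fintype n] [Fintype p] [CommRing R]
    {I : Ideal R} (M : Matrix m n R) {B : Matrix n p R} (N : Matrix p q R)
    (hB : ∀ i j, B i j ∈ I) (i : m) (j : q) : (M * B * N) i j ∈ I := by
  have hB' : B.map (Ideal.Quotient.mk I) = 0 := by
    ext i j
    exact Ideal.Quotient.eq_zero_iff_mem.2 (hB i j)
  have h : (M * B * N).map (Ideal.Quotient.mk I) = 0 := by
    rw [Matrix.map_mul, Matrix.map_mul, hB', Matrix.mul_zero, Matrix.zero_mul]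
  exact Ideal.Quotient.eq_zero_iff_mem.1 (congrFun (congrFun h i) j)

theorem Unimodular2.eq_top {R : Type*} [CommRing R] {A : Matrix (Fin 2) (Fin 2) R}
    (hA : Unimodular2 A) {I : Ideal R} (hI : ∀ i j, A i j ∈ I) : I = ⊤ := by
  refine eq_top_iff.2 (hA ▸ Ideal.span_le.2 ?_)
  simp [Set.insert_subset_iff, hI]

theorem simplyExtendable_of_adjugateRepresentsOne {R : Type*} [CommRing R]
    {A : Matrix (Fin 2) (Fin 2) R} (h : AdjugateRepresentsOne A) : SimplyExtendable A := by
  obtain ⟨w, v, h⟩ := h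
  refine ⟨!![A 0 0, A 0 1, v 0; A 1 0, A 1 1, v 1; -w 0, -w 1, 0], ?_, ?_, rfl⟩
  · rw [adjugate_fin_two] at h
    simp only [dotProduct, mulVec, Fin.isValue, of_apply, cons_val', cons_val_fin_one,
      Fin.sum_univ_two, cons_val_zero, cons_val_one, neg_mul, det_fin_three, cons_val, mul_zero,
      mul_neg, sub_neg_eq_add, zero_add, sub_zero] at h ⊢
    linear_combination h
  · intro i j
    fin_cases i <;> fin_cases j <;> rfl

theorem stmt9 (R : Type*) [CommRing R] (hEDR : IsEDR R) :
    ∀ A : Matrix (Fin 2) (Fin 2) R, Unimodular2 A → SimplyExtendable A := by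
  intro A hA
  obtain ⟨M, N, hM, hN, hoff, hdvd⟩ := hEDR 2 2 A
  set D := M * A * N with hD_def
  have hD : ∀ k l, D k l ∈ Ideal.span {D 0 0} := by
    intro k l
    fin_cases k <;> fin_cases l
    · exact Ideal.subset_span rfl
    · exact hoff 0 1 (by decide) ▸ zero_mem _
    · exact hoff 1 0 (by decide) ▸ zero_mem _
    · exact Ideal.mem_span_singleton.2 (hdvd 0 (by decide))
  have hAD : A = M⁻¹ * D * N⁻¹ := by
    rw [hD_def, ← Matrix.mul_assoc M⁻¹, nonsing_inv_mul_cancel_left _ _ hM,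
      mul_nonsing_inv_cancel_right _ _ hN]
  have hunit : IsUnit (D 0 0) := by
    rw [← Ideal.span_singleton_eq_top]
    exact hA.eq_top fun i j => hAD ▸ mul_mul_apply_mem _ _ hD i j
  have hD' : AdjugateRepresentsOne D :=
    adjugateRepresentsOne_of_isUnit_adjugate_apply (i := 1) (j := 1) (by simpa [adjugate_fin_two])
  exact simplyExtendable_of_adjugateRepresentsOne (hD'.of_mul_mul M N)
end

section
/- Let R be a commutative ring and let A = [[a,b],[c,d]] be a unimodular 2×2 matrix over R. The following are equivalent: (1) A is equivalent to the diagonal matrix Diag(1, det A), i.e., there exist invertible 2×2 matrices M, N over R with MAN = Diag(1, det A); (2) A is simply extendable; (3) there exist e, f ∈ R such that the pair (ae+cf, be+df) is unimodular; (4) there exist x, y, z, w ∈ R such that ax+by+cz+dw = 1 and the matrix [[x,y],[z,w]] is non-full. -/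
open Matrix

/-!
Everything reduces to the existence of a row vector `(e, f)` and a column vector `(g, h)`
with `(e, f) A (g, h)ᵀ = 1`, i.e. `(ae + cf) g + (be + df) h = 1`. Such vectors are the first
row of `M` and the first column of `N` in `MAN = Diag(1, det A)`; they fill the third column
and row of a simple extension `[[a, b, f], [c, d, -e], [-h, g, 0]]`, whose determinant is
exactly that bilinear expression; and they factor the non-full matrix `(e, f)ᵀ (g, h)`.
-/

theorem Ideal.span_pair_eq_top_iff_isCoprime {R : Type*} [CommSemiring R] (u v : R) :
    Ideal.span {u, v} = ⊤ ↔ IsCoprime u v := by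
  rw [Ideal.span_insert, Ideal.sup_eq_top_iff_isCoprime]

section TwoByTwo

variable {R : Type*} [CommRing R] {a b c d : R}

theorem isCoprime_of_mul_mul_apply_zero_zero {M N : Matrix (Fin 2) (Fin 2) R}
    (h : (M * !![a, b; c, d] * N) 0 0 = 1) :
    IsCoprime (a * M 0 0 + c * M 0 1) (b * M 0 0 + d * M 0 1) := by
  refine ⟨N 0 0, N 1 0, ?_⟩
  simp only [mul_apply, Fin.sum_univ_two, of_apply, cons_val', cons_val_zero, cons_val_one,
    empty_val', cons_val_fin_one] at h
  linear_combination h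

theorem exists_det_eq_one_mul_mul_eq_diagonal_of_isCoprime {e f : R}
    (hef : IsCoprime (a * e + c * f) (b * e + d * f)) :
    ∃ M N : Matrix (Fin 2) (Fin 2) R, M.det = 1 ∧ N.det = 1 ∧
      M * !![a, b; c, d] * N = !![1, 0; 0, (!![a, b; c, d] : Matrix (Fin 2) (Fin 2) R).det] := by
  obtain ⟨g, h, hgh⟩ := hef
  -- both determinants equal the expression `hgh` says is `1`
  refine ⟨!![e, f; -(c * g + d * h), a * g + b * h], !![g, -(b * e + d * f); h, a * e + c * f],
    ?_, ?_, ?_⟩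
  · rw [det_fin_two_of]
    linear_combination hgh
  · rw [det_fin_two_of]
    linear_combination hgh
  · ext i j
    fin_cases i <;> fin_cases j <;>
      simp only [mul_apply, Fin.sum_univ_two, of_apply, cons_val', cons_val_zero, cons_val_one,
        empty_val', cons_val_fin_one, det_fin_two_of, Fin.zero_eta, Fin.mk_one]
    · linear_combination hgh
    · ring
    · ring
    · linear_combination (a * d - b * c) * hgh

theorem simplyExtendable_of_isCoprime_s10 {e f : R}
    (hef : IsCoprime (a * e + c * f) (b * e + d * f)) : SimplyExtendable !![a, b; c, d] := by
  obtain ⟨g, h, hgh⟩ := hef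
  refine ⟨!![a, b, f; c, d, -e; -h, g, 0], ?_, ?_, rfl⟩
  · simp only [det_fin_three, of_apply, cons_val', cons_val_zero, cons_val_fin_one, cons_val_one,
      cons_val]
    linear_combination hgh
  · intro i j
    fin_cases i <;> fin_cases j <;> rfl

theorem SimplyExtendable.exists_isCoprime (hA : SimplyExtendable !![a, b; c, d]) :
    ∃ e f : R, IsCoprime (a * e + c * f) (b * e + d * f) := by
  obtain ⟨B, hdet, hblock, h22⟩ := hA
  have h00 : B 0 0 = a := hblock 0 0
  have h01 : B 0 1 = b := hblock 0 1
  have h10 : B 1 0 = c := hblock 1 0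
  have h11 : B 1 1 = d := hblock 1 1
  rw [det_fin_three, h00, h01, h10, h11, h22] at hdet
  exact ⟨B 1 2, -B 0 2, -B 2 1, B 2 0, by linear_combination hdet⟩

theorem exists_nonFull_of_isCoprime {e f : R}
    (hef : IsCoprime (a * e + c * f) (b * e + d * f)) :
    ∃ x y z w : R, a * x + b * y + c * z + d * w = 1 ∧ NonFull !![x, y; z, w] := by
  obtain ⟨g, h, hgh⟩ := hef
  exact ⟨e * g, e * h, f * g, f * h, by linear_combination hgh, e, f, g, h, rfl⟩

theorem exists_isCoprime_of_nonFull {x y z w : R} (hsum : a * x + b * y + c * z + d * w = 1)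
    (hxyzw : NonFull !![x, y; z, w]) :
    ∃ e f : R, IsCoprime (a * e + c * f) (b * e + d * f) := by
  obtain ⟨l, m, o, q, hlmoq⟩ := hxyzw
  have hx : x = l * o := congrFun (congrFun hlmoq 0) 0
  have hy : y = l * q := congrFun (congrFun hlmoq 0) 1
  have hz : z = m * o := congrFun (congrFun hlmoq 1) 0
  have hw : w = m * q := congrFun (congrFun hlmoq 1) 1
  subst hx hy hz hw
  exact ⟨l, m, o, q, by linear_combination hsum⟩

end TwoByTwo

theorem stmt10_general (R : Type*) [CommRing R] (a b c d : R) :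
    [(∃ M N : Matrix (Fin 2) (Fin 2) R, IsUnit M.det ∧ IsUnit N.det ∧
        M * !![a, b; c, d] * N = !![1, 0; 0, (!![a, b; c, d] : Matrix (Fin 2) (Fin 2) R).det]),
     SimplyExtendable !![a, b; c, d],
     (∃ e f : R, Ideal.span {a * e + c * f, b * e + d * f} = ⊤),
     (∃ x y z w : R, a * x + b * y + c * z + d * w = 1 ∧ NonFull !![x, y; z, w])].TFAE := by
  simp only [Ideal.span_pair_eq_top_iff_isCoprime]
  tfae_have 1 → 3 := fun ⟨M, N, _, _, hMN⟩ ↦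
    ⟨M 0 0, M 0 1, isCoprime_of_mul_mul_apply_zero_zero (by rw [hMN]; rfl)⟩
  tfae_have 3 → 1 := fun ⟨_, _, hef⟩ ↦ by
    obtain ⟨M, N, hM, hN, hMN⟩ := exists_det_eq_one_mul_mul_eq_diagonal_of_isCoprime hef
    exact ⟨M, N, hM ▸ isUnit_one, hN ▸ isUnit_one, hMN⟩
  tfae_have 3 → 2 := fun ⟨_, _, hef⟩ ↦ simplyExtendable_of_isCoprime_s10 hef
  tfae_have 2 → 3 := SimplyExtendable.exists_isCoprime
  tfae_have 3 → 4 := fun ⟨_, _, hef⟩ ↦ exists_nonFull_of_isCoprime hef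
  tfae_have 4 → 3 := fun ⟨_, _, _, _, hsum, hxyzw⟩ ↦ exists_isCoprime_of_nonFull hsum hxyzw
  tfae_finish

theorem stmt10 (R : Type*) [CommRing R] (a b c d : R)
    (hA : Unimodular2 !![a, b; c, d]) :
    [(∃ M N : Matrix (Fin 2) (Fin 2) R, IsUnit M.det ∧ IsUnit N.det ∧
        M * !![a, b; c, d] * N = !![1, 0; 0, (!![a, b; c, d] : Matrix (Fin 2) (Fin 2) R).det]),
     SimplyExtendable !![a, b; c, d],
     (∃ e f : R, Ideal.span {a * e + c * f, b * e + d * f} = ⊤),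
     (∃ x y z w : R, a * x + b * y + c * z + d * w = 1 ∧ NonFull !![x, y; z, w])].TFAE :=
  stmt10_general R a b c d
end

section
/- A commutative ring R has stable range 1.5 if and only if for every triple (a,b,c) ∈ R³ such that (a,b) is unimodular and c ≠ 0, there exists r ∈ R such that (a+br, c) is unimodular. -/
/-!
Given `x a + y b + z c = 1`, the pair `(a, y b + z c)` is unimodular, so the weaker hypothesis
yields `r` with `(a + (y b + z c) r, c)` unimodular. Modulo `c` this element is `a + b (y r)`,
so `y r` witnesses stable range 1.5 for `(a, b, c)`.
-/

/-- `R` has stable range 1.5: for every unimodular triple `(a, b, c)` with `c ≠ 0`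
there exists `r` such that `(a + b * r, c)` is unimodular. -/
def StableRange15 (R : Type*) [CommRing R] : Prop :=
  ∀ a b c : R, Ideal.span {a, b, c} = ⊤ → c ≠ 0 →
    ∃ r : R, Ideal.span {a + b * r, c} = ⊤

namespace Ideal

variable {R : Type*} [CommRing R]

theorem span_pair_le_span_triple (a b c : R) : span {a, b} ≤ span {a, b, c} :=
  span_mono <| Set.insert_subset_insert <| Set.singleton_subset_iff.mpr <| Set.mem_insert b {c}

theorem exists_mem_span_and_span_pair_eq_top {a : R} {s : Set R} (h : span (insert a s) = ⊤) :
    ∃ w ∈ span s, span {a, w} = ⊤ := by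
  obtain ⟨x, w, hw, hxw⟩ := mem_span_insert.mp (h ▸ Submodule.mem_top : (1 : R) ∈ _)
  exact ⟨w, hw, (eq_top_iff_one _).mpr <| mem_span_pair.mpr ⟨x, 1, by rw [one_mul, hxw]⟩⟩

theorem exists_span_pair_add_eq_top_of_span_triple_eq_top {a b c : R}
    (h : span {a, b, c} = ⊤) : ∃ y z : R, span {a, y * b + z * c} = ⊤ := by
  obtain ⟨w, hw, haw⟩ := exists_mem_span_and_span_pair_eq_top h
  obtain ⟨y, z, rfl⟩ := mem_span_pair.mp hw
  exact ⟨y, z, haw⟩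

end Ideal

theorem stmt11 (R : Type*) [CommRing R] :
    StableRange15 R ↔
      ∀ a b c : R, Ideal.span {a, b} = ⊤ → c ≠ 0 →
        ∃ r : R, Ideal.span {a + b * r, c} = ⊤ := by
  constructor
  · intro H a b c hab hc
    exact H a b c (top_unique (hab ▸ Ideal.span_pair_le_span_triple a b c)) hc
  · intro H a b c habc hc
    obtain ⟨y, z, hunimodular⟩ := Ideal.exists_span_pair_add_eq_top_of_span_triple_eq_top habc
    obtain ⟨r, hr⟩ := H a (y * b + z * c) c hunimodular hc
    refine ⟨y * r, ?_⟩
    rwa [← Ideal.span_pair_add_mul_right (a + b * (y * r)) c (z * r),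
      show a + b * (y * r) + z * r * c = a + (y * b + z * c) * r by ring]
end

section
/- A commutative ring R has almost stable range 1 if and only if for every triple (a,b,c) ∈ R³ such that (a,b) is unimodular and c does not lie in the Jacobson radical of R, there exists r ∈ R such that (a+br, c) is unimodular. -/
/-! An element `x` is a unit modulo `(c)` exactly when `(x, c)` is unimodular. So the forward
direction is stable range 1 of `R ⧸ (c)`, and for the converse, given `c ∈ I` outside the
Jacobson radical, a unimodular pair over `R ⧸ I` is lifted to `R`, where the hypothesis makes
`a + b r` a unit modulo `(c)`, hence modulo `I`. -/

namespace Ideal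

variable {R : Type*} [CommRing R]

theorem span_pair_map_eq_top {S : Type*} [CommRing S] (f : R →+* S) {a b : R}
    (h : span {a, b} = ⊤) : span {f a, f b} = ⊤ := by
  rw [← Set.image_pair, ← map_span, h, map_top]

theorem Quotient.isUnit_mk_span_singleton_iff {x c : R} :
    IsUnit (Quotient.mk (span {c}) x) ↔ span {x, c} = ⊤ := by
  simp only [isUnit_iff_exists_inv, Quotient.mk_surjective.exists, ← map_mul,
    ← map_one (Quotient.mk _), Quotient.eq, mem_span_singleton', eq_top_iff_one, mem_span_pair]
  constructor
  · rintro ⟨s, t, ht⟩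
    exact ⟨s, -t, by linear_combination -ht⟩
  · rintro ⟨s, t, hst⟩
    exact ⟨s, -t, by linear_combination -hst⟩

theorem Quotient.isUnit_mk_of_span_pair_eq_top {I : Ideal R} {x c : R} (hc : c ∈ I)
    (h : span {x, c} = ⊤) : IsUnit (Quotient.mk I x) := by
  have hle : span {c} ≤ I := (span_singleton_le_iff_mem I).mpr hc
  simpa using (Quotient.isUnit_mk_span_singleton_iff.mpr h).map (Quotient.factor hle)

/-- A unimodular pair over `R ⧸ I` need not lift to one over `R`, but it does after
multiplying its second entry by a suitable element. -/
theorem Quotient.exists_span_pair_eq_top_lift {I : Ideal R} {a b : R ⧸ I}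
    (h : span {a, b} = ⊤) :
    ∃ A B : R, span {A, B} = ⊤ ∧ Quotient.mk I A = a ∧ ∃ y, Quotient.mk I B = b * y := by
  obtain ⟨x, y, hxy⟩ := mem_span_pair.mp (h ▸ Submodule.mem_top : (1 : R ⧸ I) ∈ span {a, b})
  obtain ⟨A, rfl⟩ := Quotient.mk_surjective a
  obtain ⟨X, rfl⟩ := Quotient.mk_surjective x
  refine ⟨A, 1 - X * A, ?_, rfl, y, ?_⟩
  · rw [eq_top_iff_one, mem_span_pair]
    exact ⟨X, 1, by ring⟩
  · rw [map_sub, map_one, map_mul, ← hxy]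
    ring

end Ideal

open Ideal

theorem stmt12 (R : Type*) [CommRing R] :
    AlmostStableRange1 R ↔
      ∀ a b c : R, Ideal.span {a, b} = ⊤ → c ∉ Ideal.jacobson (⊥ : Ideal R) →
        ∃ r : R, Ideal.span {a + b * r, c} = ⊤ := by
  constructor
  · intro h a b c hab hc
    have hI : ¬ span {c} ≤ jacobson ⊥ := by rwa [span_singleton_le_iff_mem]
    obtain ⟨r, hr⟩ := h _ hI _ _ (span_pair_map_eq_top (Ideal.Quotient.mk (span {c})) hab)
    obtain ⟨r, rfl⟩ := Ideal.Quotient.mk_surjective r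
    refine ⟨r, Quotient.isUnit_mk_span_singleton_iff.mp ?_⟩
    rwa [map_add, map_mul]
  · intro h I hI a b hab
    obtain ⟨c, hcI, hc⟩ := SetLike.not_le_iff_exists.mp hI
    obtain ⟨A, B, hAB, rfl, y, hB⟩ := Quotient.exists_span_pair_eq_top_lift hab
    obtain ⟨r, hr⟩ := h A B c hAB hc
    refine ⟨y * Ideal.Quotient.mk I r, ?_⟩
    simpa [← mul_assoc, ← hB] using Quotient.isUnit_mk_of_span_pair_eq_top hcI hr
end

section
/- Let R be a commutative ring. (1) If R has stable range at most 1, then R has stable range 1.5. (2) If R has stable range 1.5, then R has almost stable range 1. (3) If R has almost stable range 1, then R has stable range at most 2. -/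
/-- `R` has stable range at most 1. -/
def StableRange1 (R : Type*) [CommRing R] : Prop :=
  ∀ a b : R, Ideal.span {a, b} = ⊤ → ∃ r : R, IsUnit (a + b * r)

/-- `R` has stable range at most 2. -/
def StableRange2 (R : Type*) [CommRing R] : Prop :=
  ∀ a₁ a₂ b : R, Ideal.span {a₁, a₂, b} = ⊤ →
    ∃ r₁ r₂ : R, Ideal.span {a₁ + b * r₁, a₂ + b * r₂} = ⊤

/-!
(1) From `x a + y b + z c = 1` the pair `(a, y b + z c)` is unimodular, so stable range 1 makes
`a + (y b + z c) r` a unit; this unit lies in the ideal `(a + b (y r), c)`.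

(2) A unimodular pair of `R ⧸ I` lifts to a unimodular triple `(a, b, d)` of `R` with `d ∈ I`, and
`d` can be taken nonzero because `I ≠ 0`. Stable range 1.5 makes `(a + b r, d)` unimodular, so
`a + b r` becomes a unit modulo `I`.

(3) Let `(a₁, a₂, b)` be unimodular. If `a₂` lies in the Jacobson radical, `(a₁, b)` is already
unimodular and `a₂` can be shifted by a multiple of `b` to become coprime to `a₁`. Otherwise
`R ⧸ (a₂)` has stable range 1, which yields `r` with `a₁ + b r` coprime to `a₂`.
-/

namespace Ideal

variable {R : Type*} [CommRing R]

theorem span_pair_eq_top_iff {a b : R} : span {a, b} = ⊤ ↔ IsCoprime a b := by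
  rw [span_insert, sup_eq_top_iff_isCoprime]

theorem span_triple_eq_top_iff {a b c : R} :
    span {a, b, c} = ⊤ ↔ ∃ x y z : R, x * a + y * b + z * c = 1 := by
  simp only [eq_top_iff_one, Ideal.span, Submodule.mem_span_triple, smul_eq_mul]

theorem isUnit_mk_of_isCoprime {I : Ideal R} {u d : R} (h : IsCoprime u d) (hd : d ∈ I) :
    IsUnit (Quotient.mk I u) := by
  obtain ⟨x, y, hxy⟩ := h
  refine IsUnit.of_mul_eq_one_right (Quotient.mk I x) ?_
  rw [← map_mul, ← map_one (Quotient.mk I), Quotient.eq, ← hxy]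
  simpa using I.mul_mem_left y hd

theorem isUnit_mk_span_singleton_iff {u d : R} :
    IsUnit (Quotient.mk (span {d}) u) ↔ IsCoprime u d := by
  refine ⟨fun h ↦ ?_, fun h ↦ isUnit_mk_of_isCoprime h (mem_span_singleton_self d)⟩
  obtain ⟨v, hv⟩ := h.exists_left_inv
  obtain ⟨x, rfl⟩ := Quotient.mk_surjective v
  rw [← map_mul, ← map_one (Quotient.mk _), Quotient.eq, mem_span_singleton'] at hv
  obtain ⟨y, hy⟩ := hv
  exact ⟨x, -y, by linear_combination -hy⟩

theorem span_pair_mk_eq_top {I : Ideal R} {a b c : R} (h : span {a, b, c} = ⊤) (hc : c ∈ I) :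
    span {Quotient.mk I a, Quotient.mk I b} = ⊤ := by
  obtain ⟨x, y, z, hxyz⟩ := span_triple_eq_top_iff.1 h
  have hc0 : Quotient.mk I c = 0 := Quotient.eq_zero_iff_mem.2 hc
  refine span_pair_eq_top_iff.2 ⟨Quotient.mk I x, Quotient.mk I y, ?_⟩
  simpa only [map_add, map_mul, map_one, hc0, mul_zero, add_zero] using
    congrArg (Quotient.mk I) hxyz

theorem exists_ne_zero_mem_span_triple_eq_top {I : Ideal R} (hI : I ≠ ⊥) {a b : R}
    (h : span {Quotient.mk I a, Quotient.mk I b} = ⊤) :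
    ∃ d ∈ I, d ≠ 0 ∧ span {a, b, d} = ⊤ := by
  obtain ⟨x', y', hxy⟩ := span_pair_eq_top_iff.1 h
  obtain ⟨x, rfl⟩ := Quotient.mk_surjective x'
  obtain ⟨y, rfl⟩ := Quotient.mk_surjective y'
  have hI1 : x * a + y * b - 1 ∈ I := by
    rw [← Quotient.eq]
    simpa only [map_add, map_mul, map_one] using hxy
  by_cases h0 : x * a + y * b - 1 = 0
  · obtain ⟨c, hcI, hc0⟩ := Submodule.exists_mem_ne_zero_of_ne_bot hI
    exact ⟨c, hcI, hc0, span_triple_eq_top_iff.2 ⟨x, y, 0, by linear_combination h0⟩⟩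
  · exact ⟨_, hI1, h0, span_triple_eq_top_iff.2 ⟨x, y, -1, by ring⟩⟩

theorem isCoprime_of_span_triple_eq_top_of_mem_jacobson {a b c : R} (h : span {a, b, c} = ⊤)
    (hb : b ∈ jacobson ⊥) : IsCoprime a c := by
  obtain ⟨x, y, z, hxyz⟩ := span_triple_eq_top_iff.1 h
  have hu : IsUnit (b * -y + 1) := mem_jacobson_bot.1 hb (-y)
  rw [show b * -y + 1 = x * a + z * c by linear_combination -hxyz] at hu
  obtain ⟨v, hv⟩ := hu.exists_right_inv
  exact ⟨x * v, z * v, by linear_combination hv⟩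

end Ideal

theorem IsCoprime.exists_isCoprime_add_mul {R : Type*} [CommRing R] {a b : R}
    (h : IsCoprime a b) (c : R) : ∃ r, IsCoprime a (c + b * r) := by
  obtain ⟨p, q, hpq⟩ := h
  exact ⟨q * (1 - c), p * (1 - c), 1, by linear_combination (1 - c) * hpq⟩

section

open Ideal

variable {R : Type*} [CommRing R]

theorem StableRange1.stableRange15 (h : StableRange1 R) : StableRange15 R := by
  intro a b c habc _
  obtain ⟨x, y, z, hxyz⟩ := span_triple_eq_top_iff.1 habc
  obtain ⟨r, hr⟩ := h a (y * b + z * c) (span_pair_eq_top_iff.2 ⟨x, 1, by linear_combination hxyz⟩)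
  refine ⟨y * r, eq_top_of_isUnit_mem _ ?_ hr⟩
  exact mem_span_pair.2 ⟨1, z * r, by ring⟩

theorem StableRange15.almostStableRange1 (h : StableRange15 R) : AlmostStableRange1 R := by
  intro I hI a b hab
  have hI0 : I ≠ ⊥ := by
    rintro rfl
    exact hI bot_le
  obtain ⟨a, rfl⟩ := Ideal.Quotient.mk_surjective a
  obtain ⟨b, rfl⟩ := Ideal.Quotient.mk_surjective b
  obtain ⟨d, hdI, hd0, habd⟩ := exists_ne_zero_mem_span_triple_eq_top hI0 hab
  obtain ⟨r, hr⟩ := h a b d habd hd0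
  refine ⟨Ideal.Quotient.mk I r, ?_⟩
  simpa only [map_add, map_mul] using isUnit_mk_of_isCoprime (span_pair_eq_top_iff.1 hr) hdI

theorem AlmostStableRange1.stableRange2 (h : AlmostStableRange1 R) : StableRange2 R := by
  intro a₁ a₂ b habc
  by_cases ha₂ : a₂ ∈ jacobson ⊥
  · obtain ⟨r, hr⟩ :=
      (isCoprime_of_span_triple_eq_top_of_mem_jacobson habc ha₂).exists_isCoprime_add_mul a₂
    exact ⟨0, r, by rwa [mul_zero, add_zero, span_pair_eq_top_iff]⟩
  · have hJ : ¬ span {a₂} ≤ jacobson ⊥ := by rwa [span_singleton_le_iff_mem]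
    have hpair : span {Ideal.Quotient.mk (span {a₂}) a₁, Ideal.Quotient.mk (span {a₂}) b} = ⊤ :=
      span_pair_mk_eq_top (by rwa [Set.pair_comm]) (mem_span_singleton_self a₂)
    obtain ⟨r', hr⟩ := h (span {a₂}) hJ _ _ hpair
    obtain ⟨r, rfl⟩ := Ideal.Quotient.mk_surjective r'
    rw [← map_mul, ← map_add, isUnit_mk_span_singleton_iff] at hr
    exact ⟨r, 0, by rwa [mul_zero, add_zero, span_pair_eq_top_iff]⟩

end

theorem stmt13 (R : Type*) [CommRing R] :
    (StableRange1 R → StableRange15 R) ∧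
    (StableRange15 R → AlmostStableRange1 R) ∧
    (AlmostStableRange1 R → StableRange2 R) :=
  ⟨StableRange1.stableRange15, StableRange15.almostStableRange1, AlmostStableRange1.stableRange2⟩
end

section
/- Let R be a commutative ring of stable range at most 4. If every unimodular 2×2 matrix over R is extendable (respectively, simply extendable), then for every a ∈ R every unimodular 2×2 matrix over R/Ra is extendable (respectively, simply extendable). -/
open Matrix

/-!
Lift the entries of a unimodular `A` over `R/Ra` to `x₁, …, x₄ ∈ R`. Then `(x₁, …, x₄, a)` is
unimodular, so stable range at most 4 moves the `xᵢ` by multiples of `a` to a unimodular quadruple,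
i.e. to a unimodular lift of `A`. Reducing an extension of this lift modulo `a` extends `A`.
-/

theorem Matrix.map_surjective {m n α β : Type*} {f : α → β} (hf : Function.Surjective f) :
    Function.Surjective fun M : Matrix m n α => M.map f :=
  fun M => ⟨M.map (Function.surjInv hf), by ext; simp [Function.surjInv_eq hf]⟩

theorem Ideal.span_union_singleton_eq_top_of_span_image_mk {R : Type*} [CommRing R] {b : R}
    {s : Set R} (h : Ideal.span (Ideal.Quotient.mk (Ideal.span {b}) '' s) = ⊤) :
    Ideal.span (s ∪ {b}) = ⊤ := by
  rw [Ideal.span_union, sup_comm, ← Ideal.comap_map_quotientMk, Ideal.map_span, h,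
    Ideal.comap_top]

section

variable {R S : Type*} [CommRing R] [CommRing S] {A : Matrix (Fin 2) (Fin 2) R}

theorem Extendable.map (f : R →+* S) (h : Extendable A) : Extendable (A.map f) := by
  obtain ⟨B, hdet, hblock⟩ := h
  exact ⟨B.map f, (f.map_det B).symm.trans (by rw [hdet, map_one]),
    fun i j => by simp [hblock]⟩

theorem SimplyExtendable.map (f : R →+* S) (h : SimplyExtendable A) :
    SimplyExtendable (A.map f) := by
  obtain ⟨B, hdet, hblock, hcorner⟩ := h
  exact ⟨B.map f, (f.map_det B).symm.trans (by rw [hdet, map_one]),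
    fun i j => by simp [hblock], by simp [hcorner]⟩

end

theorem Unimodular2.exists_lift_of_stableRange {R : Type*} [CommRing R]
    (hsr4 : ∀ a₁ a₂ a₃ a₄ b : R, Ideal.span {a₁, a₂, a₃, a₄, b} = ⊤ →
      ∃ r₁ r₂ r₃ r₄ : R,
        Ideal.span {a₁ + b * r₁, a₂ + b * r₂, a₃ + b * r₃, a₄ + b * r₄} = ⊤)
    {b : R} {A : Matrix (Fin 2) (Fin 2) (R ⧸ Ideal.span {b})} (hA : Unimodular2 A) :
    ∃ A' : Matrix (Fin 2) (Fin 2) R, Unimodular2 A' ∧ A'.map (Ideal.Quotient.mk _) = A := by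
  obtain ⟨L, rfl⟩ := Matrix.map_surjective Ideal.Quotient.mk_surjective A
  have hL : Ideal.span {L 0 0, L 0 1, L 1 0, L 1 1, b} = ⊤ := by
    simpa only [Set.insert_union, Set.singleton_union] using
      Ideal.span_union_singleton_eq_top_of_span_image_mk (s := {L 0 0, L 0 1, L 1 0, L 1 1})
        (by simpa [Unimodular2, Set.image_insert_eq] using hA)
  obtain ⟨r₁, r₂, r₃, r₄, hr⟩ := hsr4 _ _ _ _ _ hL
  refine ⟨L + b • !![r₁, r₂; r₃, r₄], by simpa [Unimodular2] using hr, ?_⟩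
  ext i j
  fin_cases i <;> fin_cases j <;> simp [Ideal.Quotient.mk_singleton_self]

theorem stmt15 (R : Type*) [CommRing R]
    (hsr4 : ∀ a₁ a₂ a₃ a₄ b : R, Ideal.span {a₁, a₂, a₃, a₄, b} = ⊤ →
      ∃ r₁ r₂ r₃ r₄ : R,
        Ideal.span {a₁ + b * r₁, a₂ + b * r₂, a₃ + b * r₃, a₄ + b * r₄} = ⊤) :
    ((∀ A : Matrix (Fin 2) (Fin 2) R, Unimodular2 A → Extendable A) →
      ∀ a : R, ∀ A : Matrix (Fin 2) (Fin 2) (R ⧸ Ideal.span {a}),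
        Unimodular2 A → Extendable A) ∧
    ((∀ A : Matrix (Fin 2) (Fin 2) R, Unimodular2 A → SimplyExtendable A) →
      ∀ a : R, ∀ A : Matrix (Fin 2) (Fin 2) (R ⧸ Ideal.span {a}),
        Unimodular2 A → SimplyExtendable A) := by
  constructor
  · intro hext a A hA
    obtain ⟨A', hA', rfl⟩ := hA.exists_lift_of_stableRange hsr4
    exact (hext A' hA').map _
  · intro hext a A hA
    obtain ⟨A', hA', rfl⟩ := hA.exists_lift_of_stableRange hsr4
    exact (hext A' hA').map _
end

section
/- Let R be a commutative ring. If for every a ∈ R every unimodular 2×2 matrix over R/Ra of determinant 0 is extendable, then every unimodular 2×2 matrix over R is extendable. Moreover, if R has stable range at most 4, the converse also holds: if every unimodular 2×2 matrix over R is extendable, then for every a ∈ R every unimodular 2×2 matrix over R/Ra of determinant 0 is extendable. -/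
open Matrix

theorem stmt17 (R : Type*) [CommRing R] :
    ((∀ a : R, ∀ A : Matrix (Fin 2) (Fin 2) (R ⧸ Ideal.span {a}),
        Unimodular2 A → A.det = 0 → Extendable A) →
      ∀ A : Matrix (Fin 2) (Fin 2) R, Unimodular2 A → Extendable A) ∧
    ((∀ a₁ a₂ a₃ a₄ b : R, Ideal.span {a₁, a₂, a₃, a₄, b} = ⊤ →
        ∃ r₁ r₂ r₃ r₄ : R,
          Ideal.span {a₁ + b * r₁, a₂ + b * r₂, a₃ + b * r₃, a₄ + b * r₄} = ⊤) →
      (∀ A : Matrix (Fin 2) (Fin 2) R, Unimodular2 A → Extendable A) →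
      ∀ a : R, ∀ A : Matrix (Fin 2) (Fin 2) (R ⧸ Ideal.span {a}),
        Unimodular2 A → A.det = 0 → Extendable A) := by

  constructor
  · -- Part 1
    intro h A hA
    set I : Ideal R := Ideal.span {A.det} with hI
    set mk : R →+* (R ⧸ I) := Ideal.Quotient.mk I with hmk
    have hAquni : Unimodular2 (A.map mk) := by
      unfold Unimodular2 at hA ⊢
      have h1 : Ideal.map mk (Ideal.span {A 0 0, A 0 1, A 1 0, A 1 1}) = ⊤ := by
        rw [hA, Ideal.map_top]
      rw [Ideal.map_span] at h1
      simpa [Set.image_insert_eq, Matrix.map_apply] using h1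
    have hAqdet : (A.map mk).det = 0 := by
      have h2 : (A.map (⇑mk)).det = mk A.det := (RingHom.map_det mk A).symm
      rw [h2]
      exact Ideal.Quotient.eq_zero_iff_mem.mpr (Ideal.subset_span rfl)
    obtain ⟨B, hBdet, hBtl⟩ := h A.det (A.map mk) hAquni hAqdet
    choose C₀ hC₀ using fun i j => Ideal.Quotient.mk_surjective (B i j)
    set C : Matrix (Fin 3) (Fin 3) R := fun i j =>
      if hij : (i : ℕ) < 2 ∧ (j : ℕ) < 2 then A ⟨i, hij.1⟩ ⟨j, hij.2⟩ else C₀ i j with hC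
    have htl : ∀ i j : Fin 2, C i.castSucc j.castSucc = A i j := by
      intro i j
      have hij : ((i.castSucc : Fin 3) : ℕ) < 2 ∧ ((j.castSucc : Fin 3) : ℕ) < 2 :=
        ⟨i.isLt, j.isLt⟩
      rw [hC]
      simp only [dif_pos hij]
      congr 1
    have hmap : C.map mk = B := by
      ext i j
      rw [Matrix.map_apply, hC]
      by_cases hij : (i : ℕ) < 2 ∧ (j : ℕ) < 2
      · simp only [dif_pos hij]
        have e1 : ((⟨(i : ℕ), hij.1⟩ : Fin 2)).castSucc = i := Fin.ext rfl
        have e2 : ((⟨(j : ℕ), hij.2⟩ : Fin 2)).castSucc = j := Fin.ext rfl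
        have h3 := hBtl ⟨(i : ℕ), hij.1⟩ ⟨(j : ℕ), hij.2⟩
        rw [e1, e2] at h3
        rw [h3]
        rfl
      · simp only [dif_neg hij]
        exact hC₀ i j
    have hCdet : mk C.det = 1 := by
      have h4 : mk C.det = (C.map (⇑mk)).det := RingHom.map_det mk C
      rw [h4, hmap, hBdet]
    have hmem : C.det - 1 ∈ I := by
      have h5 : mk (C.det - 1) = 0 := by
        rw [map_sub, hCdet, _root_.map_one, sub_self]
      exact Ideal.Quotient.eq_zero_iff_mem.mp h5
    rw [hI, Ideal.mem_span_singleton'] at hmem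
    obtain ⟨t, ht⟩ := hmem
    have e00 : C 0 0 = A 0 0 := by simpa using htl 0 0
    have e01 : C 0 1 = A 0 1 := by simpa using htl 0 1
    have e10 : C 1 0 = A 1 0 := by simpa using htl 1 0
    have e11 : C 1 1 = A 1 1 := by simpa using htl 1 1
    refine ⟨Matrix.of ![C 0, C 1, ![C 2 0, C 2 1, C 2 2 - t]], ?_, ?_⟩
    · rw [Matrix.det_fin_three, Matrix.det_fin_two] at ht
      rw [Matrix.det_fin_three]
      simp only [Matrix.of_apply, Matrix.cons_val', Matrix.cons_val_zero, Matrix.cons_val_one,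
        Matrix.head_cons, Matrix.cons_val_two, Matrix.tail_cons, Matrix.head_fin_const,
        Matrix.empty_val', Matrix.cons_val_fin_one]
      rw [← e00, ← e01, ← e10, ← e11] at ht
      linear_combination -ht
    · intro i j
      fin_cases i <;> fin_cases j <;> simp [e00, e01, e10, e11]
  · -- Part 2
    intro hsr hext a A hA hAdet
    obtain ⟨a₁, ha₁⟩ := Ideal.Quotient.mk_surjective (A 0 0)
    obtain ⟨a₂, ha₂⟩ := Ideal.Quotient.mk_surjective (A 0 1)
    obtain ⟨a₃, ha₃⟩ := Ideal.Quotient.mk_surjective (A 1 0)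
    obtain ⟨a₄, ha₄⟩ := Ideal.Quotient.mk_surjective (A 1 1)
    have hamem : a ∈ ({a₁, a₂, a₃, a₄, a} : Set R) := by simp
    have htop : Ideal.span ({a₁, a₂, a₃, a₄, a} : Set R) = ⊤ := by
      have hmaptop : Ideal.map (Ideal.Quotient.mk (Ideal.span {a}))
          (Ideal.span ({a₁, a₂, a₃, a₄, a} : Set R)) = ⊤ := by
        rw [Ideal.map_span]
        rw [eq_top_iff, ← hA]
        apply Ideal.span_mono
        intro x hx
        simp only [Set.mem_insert_iff, Set.mem_singleton_iff] at hx
        rcases hx with rfl | rfl | rfl | rfl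
        · exact ⟨a₁, by simp, ha₁⟩
        · exact ⟨a₂, by simp, ha₂⟩
        · exact ⟨a₃, by simp, ha₃⟩
        · exact ⟨a₄, by simp, ha₄⟩
      have hcm := Ideal.comap_map_of_surjective (Ideal.Quotient.mk (Ideal.span {a}))
        Ideal.Quotient.mk_surjective (Ideal.span ({a₁, a₂, a₃, a₄, a} : Set R))
      rw [hmaptop, Ideal.comap_top] at hcm
      have hker' : Ideal.comap (Ideal.Quotient.mk (Ideal.span {a})) ⊥ = Ideal.span {a} :=
        Ideal.mk_ker
      rw [hker'] at hcm
      have hle : Ideal.span ({a} : Set R) ≤ Ideal.span ({a₁, a₂, a₃, a₄, a} : Set R) := by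
        rw [Ideal.span_le]
        intro x hx
        rw [Set.mem_singleton_iff] at hx
        subst hx
        exact Ideal.subset_span hamem
      rw [eq_top_iff, hcm]
      exact sup_le le_rfl hle
    obtain ⟨r₁, r₂, r₃, r₄, hr⟩ := hsr a₁ a₂ a₃ a₄ a htop
    set A' : Matrix (Fin 2) (Fin 2) R :=
      !![a₁ + a * r₁, a₂ + a * r₂; a₃ + a * r₃, a₄ + a * r₄] with hA'
    have hA'uni : Unimodular2 A' := by
      unfold Unimodular2
      rw [hA']
      simpa using hr
    have hA'mk : ∀ i j : Fin 2, Ideal.Quotient.mk (Ideal.span {a}) (A' i j) = A i j := by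
      have hz : Ideal.Quotient.mk (Ideal.span {a}) a = 0 :=
        Ideal.Quotient.eq_zero_iff_mem.mpr (Ideal.subset_span rfl)
      intro i j
      fin_cases i <;> fin_cases j <;>
        simp [hA', _root_.map_add, _root_.map_mul, hz, ha₁, ha₂, ha₃, ha₄]
    obtain ⟨B, hBdet, hBtl⟩ := hext A' hA'uni
    refine ⟨B.map (Ideal.Quotient.mk (Ideal.span {a})), ?_, ?_⟩
    · have h6 : (B.map (⇑(Ideal.Quotient.mk (Ideal.span {a})))).det =
          Ideal.Quotient.mk (Ideal.span {a}) B.det :=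
        (RingHom.map_det (Ideal.Quotient.mk (Ideal.span {a})) B).symm
      rw [h6, hBdet, _root_.map_one]
    · intro i j
      rw [Matrix.map_apply, hBtl, hA'mk]
end

section
/- Every commutative semilocal ring (a commutative ring with only finitely many maximal ideals) is an SE₂ ring: every unimodular 2×2 matrix over it is simply extendable. -/
open Matrix

open MvPolynomial

/-!
Bordering `A = !![a, b; c, d]` by a column `(x₀, x₁)`, a row `(y₀, y₁)` and the corner `0` gives
determinant `x₀ (c y₁ - d y₀) - x₁ (a y₁ - b y₀)`, a polynomial in the border entries. Modulo any
maximal ideal some entry of `A` survives, and a border of `0`s and `±1`s makes the determinant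
equal to that entry. With finitely many maximal ideals, the Chinese remainder theorem glues these
local borders into one whose determinant lies in no maximal ideal, i.e. is a unit; rescaling the
bordering column then makes it `1`.
-/

theorem Ideal.exists_forall_sub_mem_of_finite_isMaximal {R σ : Type*} [CommRing R]
    (hR : {I : Ideal R | I.IsMaximal}.Finite) (x : {I : Ideal R // I.IsMaximal} → σ → R) :
    ∃ r : σ → R, ∀ m s, r s - x m s ∈ m.1 := by
  have : Finite {I : Ideal R // I.IsMaximal} := hR.to_subtype
  have hcoprime : Pairwise (Function.onFun IsCoprime fun m : {I : Ideal R // I.IsMaximal} => m.1) :=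
    fun m n hmn => Ideal.isCoprime_iff_sup_eq.mpr
      (m.2.coprime_of_ne n.2 fun h => hmn (Subtype.ext h))
  choose r hr using fun s => Ideal.exists_forall_sub_mem_ideal hcoprime (fun m => x m s)
  exact ⟨r, fun m s => hr s m⟩

theorem MvPolynomial.exists_isUnit_eval_of_finite_isMaximal {R σ : Type*} [CommRing R]
    (hR : {I : Ideal R | I.IsMaximal}.Finite) (p : MvPolynomial σ R)
    (hp : ∀ m : Ideal R, m.IsMaximal → ∃ x, eval x p ∉ m) :
    ∃ x, IsUnit (eval x p) := by
  choose x hx using fun m : {I : Ideal R // I.IsMaximal} => hp m.1 m.2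
  obtain ⟨r, hr⟩ := Ideal.exists_forall_sub_mem_of_finite_isMaximal hR x
  refine ⟨r, by_contra fun hunit => ?_⟩
  obtain ⟨M, hM, hrM⟩ := exists_max_ideal_of_mem_nonunits (mem_nonunits_iff.mpr hunit)
  have hcongr : Ideal.Quotient.mk M ∘ r = Ideal.Quotient.mk M ∘ x ⟨M, hM⟩ :=
    _root_.funext fun s => Ideal.Quotient.eq.mpr (hr ⟨M, hM⟩ s)
  apply hx ⟨M, hM⟩
  rw [← Ideal.Quotient.eq_zero_iff_mem, map_eval, ← hcongr, ← map_eval,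
    Ideal.Quotient.eq_zero_iff_mem]
  exact hrM

section Bordering

variable {R : Type*} [CommRing R]

/-- `A` bordered by the column `(u 0, u 1)`, the row `(u 2, u 3)` and the corner `0`. -/
def border (A : Matrix (Fin 2) (Fin 2) R) (u : Fin 4 → R) : Matrix (Fin 3) (Fin 3) R :=
  !![A 0 0, A 0 1, u 0; A 1 0, A 1 1, u 1; u 2, u 3, 0]

theorem det_border (A : Matrix (Fin 2) (Fin 2) R) (u : Fin 4 → R) :
    (border A u).det = u 0 * (A 1 0 * u 3 - A 1 1 * u 2) - u 1 * (A 0 0 * u 3 - A 0 1 * u 2) := by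
  rw [border, det_fin_three]
  simp only [of_apply, cons_val', cons_val_zero, cons_val_one, cons_val_two, empty_val',
    cons_val_fin_one, tail_cons, vecHead]
  ring

noncomputable def borderDetPoly (A : Matrix (Fin 2) (Fin 2) R) : MvPolynomial (Fin 4) R :=
  X 0 * (C (A 1 0) * X 3 - C (A 1 1) * X 2) - X 1 * (C (A 0 0) * X 3 - C (A 0 1) * X 2)

theorem eval_borderDetPoly (A : Matrix (Fin 2) (Fin 2) R) (u : Fin 4 → R) :
    eval u (borderDetPoly A) = (border A u).det := by
  simp [borderDetPoly, det_border]

theorem exists_det_border_notMem {A : Matrix (Fin 2) (Fin 2) R} (hA : Unimodular2 A)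
    {m : Ideal R} (hm : m.IsMaximal) : ∃ u, (border A u).det ∉ m := by
  by_contra! hdet
  have h00 : A 0 0 ∈ m := by simpa [det_border] using hdet ![0, -1, 0, 1]
  have h01 : A 0 1 ∈ m := by simpa [det_border] using hdet ![0, 1, 1, 0]
  have h10 : A 1 0 ∈ m := by simpa [det_border] using hdet ![1, 0, 0, 1]
  have h11 : A 1 1 ∈ m := by simpa [det_border] using hdet ![1, 0, -1, 0]
  refine hm.ne_top (top_le_iff.mp (hA ▸ Ideal.span_le.mpr ?_))
  simp [Set.insert_subset_iff, h00, h01, h10, h11]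

theorem det_border_smul_column (A : Matrix (Fin 2) (Fin 2) R) (u : Fin 4 → R) (v : R) :
    (border A ![v * u 0, v * u 1, u 2, u 3]).det = v * (border A u).det := by
  simp only [det_border, cons_val_zero, cons_val_one, cons_val_two, cons_val_three, head_cons,
    tail_cons]
  ring

end Bordering

theorem stmt18 (R : Type*) [CommRing R]
    (hsemilocal : {I : Ideal R | I.IsMaximal}.Finite) :
    ∀ A : Matrix (Fin 2) (Fin 2) R, Unimodular2 A → SimplyExtendable A := by
  intro A hA
  obtain ⟨u, hunit⟩ := exists_isUnit_eval_of_finite_isMaximal hsemilocal (borderDetPoly A)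
    fun m hm => by simpa only [eval_borderDetPoly] using exists_det_border_notMem hA hm
  obtain ⟨v, hv⟩ := hunit.exists_left_inv
  rw [eval_borderDetPoly] at hv
  refine ⟨border A ![v * u 0, v * u 1, u 2, u 3], ?_, ?_, rfl⟩
  · rw [det_border_smul_column, hv]
  · intro i j
    fin_cases i <;> fin_cases j <;> rfl
end
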